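/- arXiv:2102.10364 — 6 statements merged into one kernel-verified Lean document; each statement's English description precedes it below -/
import Mathlib

section
/- For every integer k ≥ 1, setting m = k² + k − 1 and M = (m−1)/2, one has the identity t^{e(k−1,k)}·D_{k−1,k}(t) = (t² − 1)·Ψ_m(t) in ℤ[t, t⁻¹]; in particular D_{k−1,k}(t) = (t^{k²+k−1} + 1)(t − 1). -/
open LaurentPolynomial

/-- The Laurent polynomial `D_{n,k}(t) = -t^{(k+2)n+1} + t^{(k+1)(n+1)}(t^{k+1}+1)
- t^{k(n+3)+1} + t - 1` in `ℤ[t,t⁻¹]`. -/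
noncomputable def D (n k : ℤ) : LaurentPolynomial ℤ :=
  -T ((k + 2) * n + 1) + T ((k + 1) * (n + 1)) * (T (k + 1) + 1) -
    T (k * (n + 3) + 1) + T 1 - 1

/-- The exponent `e(n,k) = n(n-1)/2 + k(k-1) - 2nk`. -/
def e (n k : ℤ) : ℤ := n * (n - 1) / 2 + k * (k - 1) - 2 * n * k

/-- For odd `m ≥ 1` with `M = (m-1)/2`, the symmetric Laurent polynomial
`Ψ_m(t) = ∑_{j=-M}^{M} (-1)^{M+j} t^j`. -/
noncomputable def Psi (m : ℤ) : LaurentPolynomial ℤ :=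
  ∑ j ∈ Finset.Icc (-((m - 1) / 2)) ((m - 1) / 2),
    ((((m - 1) / 2 + j).negOnePow : ℤ) : LaurentPolynomial ℤ) * T j

/-! Both `D_{k-1,k}` and `e(k-1,k)` simplify because `(k+2)(k-1)+1 = (k+1)k - 1 = k²+k-1 = m`:
one gets `D_{k-1,k} = (t^m + 1)(t - 1)` and `e(k-1,k) = -M`. The first identity is then
`(t + 1) Ψ_m = t^{-M} (t^m + 1)` multiplied by `t - 1`, and that relation holds because multiplying
an alternating sum of consecutive monomials by `t + 1` telescopes. -/

namespace LaurentPolynomial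

variable {R : Type*} [CommRing R]

lemma T_one_add_one_mul_sum_Icc_negOnePow (a b : ℤ) (hab : a - 1 ≤ b) :
    (T 1 + 1) * ∑ j ∈ Finset.Icc a b, (((j - a).negOnePow : ℤ) : R[T;T⁻¹]) * T j =
      T a + (((b - a).negOnePow : ℤ) : R[T;T⁻¹]) * T (b + 1) := by
  induction b, hab using Int.leInduction with
  | base =>
    rw [Finset.Icc_eq_empty (by omega), Finset.sum_empty, sub_sub_cancel_left,
      Int.negOnePow_neg, Int.negOnePow_one, sub_add_cancel]
    push_cast
    ring
  | succ b hab ih =>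
    rw [← Finset.insert_Icc_right_eq_Icc_add_one (by omega),
      Finset.sum_insert (by simp), mul_add, ih,
      show b + 1 - a = b - a + 1 by ring, Int.negOnePow_succ,
      show b + 1 + 1 = 1 + (b + 1) by ring, T_add 1 (b + 1)]
    push_cast
    ring

end LaurentPolynomial

open LaurentPolynomial

lemma T_one_add_one_mul_Psi {m : ℤ} (hm : Odd m) (hm₀ : 0 < m) :
    (T 1 + 1) * Psi m = T (-((m - 1) / 2)) * (T m + 1) := by
  obtain ⟨M, rfl⟩ := hm
  have hM : (2 * M + 1 - 1) / 2 = M := by omega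
  have hsum := T_one_add_one_mul_sum_Icc_negOnePow (R := ℤ) (-M) M (by omega)
  simp only [sub_neg_eq_add, add_comm _ M, ← two_mul, Int.negOnePow_two_mul, Units.val_one,
    Int.cast_one, one_mul] at hsum
  rw [Psi, hM, hsum, mul_add, ← T_add, mul_one, add_comm]
  ring_nf

lemma D_sub_one_self (k : ℤ) : D (k - 1) k = (T (k ^ 2 + k - 1) + 1) * (T 1 - 1) := by
  have h₁ : (T ((k + 1) * (k - 1 + 1)) : LaurentPolynomial ℤ) = T (k ^ 2 + k - 1) * T 1 := by
    rw [← T_add]; ring_nf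
  have h₂ : (T (k * (k - 1 + 3) + 1) : LaurentPolynomial ℤ) =
      T (k ^ 2 + k - 1) * T (k + 1) * T 1 := by
    rw [← T_add, ← T_add]; ring_nf
  rw [D, h₁, h₂, show (k + 2) * (k - 1) + 1 = k ^ 2 + k - 1 by ring]
  ring

lemma e_sub_one_self (k : ℤ) : e (k - 1) k = -((k ^ 2 + k - 1 - 1) / 2) := by
  obtain ⟨r, hr⟩ := Int.even_mul_pred_self (k - 1)
  rw [e, hr, show k ^ 2 + k - 1 - 1 = 2 * (r + 2 * (k - 1)) by linear_combination hr,
    ← two_mul, Int.mul_ediv_cancel_left _ two_ne_zero, Int.mul_ediv_cancel_left _ two_ne_zero]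
  linear_combination -hr

/-- For `k ≥ 1`, with `m = k² + k - 1`, one has
`t^{e(k-1,k)} · D_{k-1,k}(t) = (t² - 1) · Ψ_m(t)`; in particular
`D_{k-1,k}(t) = (t^{k²+k-1} + 1)(t - 1)`. -/
theorem D_pred_k_eq (k : ℤ) (hk : 1 ≤ k) :
    T (e (k - 1) k) * D (k - 1) k = (T 2 - 1) * Psi (k ^ 2 + k - 1) ∧
    D (k - 1) k = (T (k ^ 2 + k - 1) + 1) * (T 1 - 1) := by
  refine ⟨?_, D_sub_one_self k⟩
  have hm : Odd (k ^ 2 + k - 1) := by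
    obtain ⟨r, hr⟩ := Int.even_mul_succ_self k
    exact ⟨r - 1, by linear_combination hr⟩
  have hPsi := T_one_add_one_mul_Psi hm (by nlinarith)
  have hT2 : (T 2 : LaurentPolynomial ℤ) = T 1 * T 1 := by rw [← T_add, one_add_one_eq_two]
  rw [e_sub_one_self, D_sub_one_self]
  linear_combination -(T 1 - 1) * hPsi - Psi (k ^ 2 + k - 1) * hT2
end

section
/- For every integer k ≥ 1, setting m = 2k² + 4k + 1 and M = (m−1)/2, one has the identity t^{e(2k,k)}·D_{2k,k}(t) = (t² − 1)·Ψ_m(t) in ℤ[t, t⁻¹]; in particular D_{2k,k}(t) = (t^{2k²+4k+1} + 1)(t − 1). -/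
open LaurentPolynomial

/-!
With `m = 2k² + 4k + 1`, two of the five monomials of `D_{2k,k}` have the same exponent
`m - k`, and the remaining terms factor as `(t^m + 1)(t - 1)`. On the other side, `t^M Ψ_{2M+1}`
is the alternating geometric sum `∑_{i=0}^{2M} (-t)^i`, so `(t + 1) t^M Ψ_{2M+1} = t^{2M+1} + 1`.
Since `e(2k,k) = -M` for `M = k² + 2k`, the two identities combine.
-/

open Finset

lemma e_two_mul_self (k : ℤ) : e (2 * k) k = -(k ^ 2 + 2 * k) := by
  rw [e, show 2 * k * (2 * k - 1) = k * (2 * k - 1) * 2 by ring,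
    Int.mul_ediv_cancel _ two_ne_zero]
  ring

lemma D_two_mul_self (k : ℤ) : D (2 * k) k = (T (2 * k ^ 2 + 4 * k + 1) + 1) * (T 1 - 1) := by
  set m := 2 * k ^ 2 + 4 * k + 1
  have hT : T (m + 1) = T m * (T 1 : LaurentPolynomial ℤ) := T_add m 1
  have hTk : T (m - k) * T (k + 1) = (T (m + 1) : LaurentPolynomial ℤ) := by
    rw [← T_add]; ring_nf
  rw [D, show (k + 2) * (2 * k) + 1 = m by ring, show (k + 1) * (2 * k + 1) = m - k by ring,
    show k * (2 * k + 3) + 1 = m - k by ring]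
  linear_combination hTk + hT

lemma T_mul_Psi_two_mul_add_one (M : ℕ) :
    T M * Psi (2 * M + 1) = ∑ i ∈ range (2 * M + 1), (-T 1) ^ i := by
  rw [Psi, show (2 * (M : ℤ) + 1 - 1) / 2 = M by omega, mul_sum]
  refine sum_nbij' (fun j ↦ (j + M).toNat) (fun i ↦ i - M) ?_ ?_ ?_ ?_ ?_
  · intro j hj; simp only [mem_Icc, mem_range] at hj ⊢; omega
  · intro i hi; simp only [mem_Icc, mem_range] at hi ⊢; omega
  · intro j hj; simp only [mem_Icc] at hj; omega
  · intro i _; simp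
  · intro j hj
    simp only [mem_Icc] at hj
    obtain ⟨i, hi⟩ : ∃ i : ℕ, (i : ℤ) = M + j := ⟨(M + j).toNat, by omega⟩
    rw [show (j + M).toNat = i by omega, neg_pow, T_pow, mul_one, mul_left_comm, ← T_add, ← hi,
      Int.coe_negOnePow_natCast]
    push_cast
    rfl

lemma T_one_add_one_mul_T_mul_Psi (M : ℕ) :
    (T 1 + 1) * (T M * Psi (2 * M + 1)) = T (2 * M + 1) + 1 := by
  have hgeom := geom_sum_mul (-T 1 : LaurentPolynomial ℤ) (2 * M + 1)
  rw [neg_pow, T_pow, mul_one, Odd.neg_one_pow ⟨M, rfl⟩] at hgeom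
  push_cast at hgeom
  rw [T_mul_Psi_two_mul_add_one]
  linear_combination -hgeom

/-- For `k ≥ 1`, with `m = 2k² + 4k + 1`, one has
`t^{e(2k,k)} · D_{2k,k}(t) = (t² - 1) · Ψ_m(t)`; in particular
`D_{2k,k}(t) = (t^{2k²+4k+1} + 1)(t - 1)`. -/
theorem D_two_k_k_eq (k : ℤ) (hk : 1 ≤ k) :
    T (e (2 * k) k) * D (2 * k) k = (T 2 - 1) * Psi (2 * k ^ 2 + 4 * k + 1) ∧
    D (2 * k) k = (T (2 * k ^ 2 + 4 * k + 1) + 1) * (T 1 - 1) := by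
  refine ⟨?_, D_two_mul_self k⟩
  obtain ⟨M, hM⟩ : ∃ M : ℕ, (M : ℤ) = k ^ 2 + 2 * k :=
    ⟨(k ^ 2 + 2 * k).toNat, Int.toNat_of_nonneg (by nlinarith)⟩
  have hTM : T (-M) * T M = (1 : LaurentPolynomial ℤ) := by rw [← T_add]; simp
  have hT2 : T 2 = (T 1 * T 1 : LaurentPolynomial ℤ) := by rw [← T_add]; norm_num
  rw [e_two_mul_self, D_two_mul_self, show 2 * k ^ 2 + 4 * k + 1 = 2 * M + 1 by omega, ← hM,
    ← T_one_add_one_mul_T_mul_Psi, hT2]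
  linear_combination (T 1 ^ 2 - 1) * Psi (2 * M + 1) * hTM
end

section
/- For every integer k ≥ 1, setting m = 2k² + 4k + 1 and M = (m−1)/2, one has the identity t^{e(2k+1,k)}·D_{2k+1,k}(t) = (t² − 1)·Ψ_m(t) in ℤ[t, t⁻¹]; in particular D_{2k+1,k}(t) = (t^{2k²+4k+1} + 1)(t − 1). -/
open LaurentPolynomial

/-
Writing `Ψ_{2M+1}` as a sum over `[-M, M]`, its two outermost terms both carry the sign `+1`
and every inner sign flips when `M` increases, so `Ψ_{2M+3} = t^{M+1} + t^{-(M+1)} - Ψ_{2M+1}`;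
by induction `(t + 1) Ψ_{2M+1} = t^{M+1} + t^{-M}`. For `n = 2k + 1` the exponents in `D_{n,k}`
are `m + k + 1`, `m + 1`, `m + k + 2` and `m` with `m = 2k² + 4k + 1`, so the first three
cancel to leave `(t^m + 1)(t - 1)`, while `e(2k+1, k) = -(k² + 2k) = -M`.
-/

lemma T_two_sub_one {R : Type*} [CommRing R] :
    (T 2 : LaurentPolynomial R) - 1 = (T 1 - 1) * (T 1 + 1) := by
  rw [show (2 : ℤ) = 1 + 1 by norm_num, T_add]
  ring

namespace Psi

lemma two_mul_add_one (M : ℤ) :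
    Psi (2 * M + 1) = ∑ j ∈ Finset.Icc (-M) M,
      (((M + j).negOnePow : ℤ) : LaurentPolynomial ℤ) * T j := by
  rw [Psi, show (2 * M + 1 - 1) / 2 = M by omega]

lemma two_mul_add_three {M : ℤ} (hM : 0 ≤ M) :
    Psi (2 * M + 3) = T (M + 1) + T (-(M + 1)) - Psi (2 * M + 1) := by
  have hIcc : Finset.Icc (-(M + 1)) (M + 1)
      = insert (-(M + 1)) (insert (M + 1) (Finset.Icc (-M) M)) := by
    ext x; simp only [Finset.mem_Icc, Finset.mem_insert]; omega
  have hleft : -(M + 1) ∉ insert (M + 1) (Finset.Icc (-M) M) := by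
    simp only [Finset.mem_insert, Finset.mem_Icc]; omega
  have hright : M + 1 ∉ Finset.Icc (-M) M := by simp
  have hsign : ∀ j ∈ Finset.Icc (-M) M,
      (((M + 1 + j).negOnePow : ℤ) : LaurentPolynomial ℤ) * T j
        = -((((M + j).negOnePow : ℤ) : LaurentPolynomial ℤ) * T j) := by
    intro j _
    rw [show M + 1 + j = M + j + 1 by ring, Int.negOnePow_succ]
    push_cast
    ring
  rw [show 2 * M + 3 = 2 * (M + 1) + 1 by ring, two_mul_add_one, two_mul_add_one, hIcc,
    Finset.sum_insert hleft, Finset.sum_insert hright, Finset.sum_congr rfl hsign,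
    Finset.sum_neg_distrib, show M + 1 + -(M + 1) = 2 * 0 by ring,
    show M + 1 + (M + 1) = 2 * (M + 1) by ring, Int.negOnePow_two_mul, Int.negOnePow_two_mul]
  push_cast
  ring

lemma T_one_add_one_mul {M : ℤ} (hM : 0 ≤ M) :
    (T 1 + 1) * Psi (2 * M + 1) = T (M + 1) + T (-M) := by
  induction M, hM using Int.leInduction with
  | base => simp [Psi, T_zero]
  | succ M hM ih =>
    rw [show 2 * (M + 1) + 1 = 2 * M + 3 by ring, two_mul_add_three hM, mul_sub, ih,
      mul_add, add_mul, add_mul, one_mul, one_mul, ← T_add, ← T_add,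
      show 1 + (M + 1) = M + 1 + 1 by ring, show 1 + -(M + 1) = -M by ring]
    ring

end Psi

lemma D_two_mul_add_one_self (k : ℤ) :
    D (2 * k + 1) k = (T (2 * k ^ 2 + 4 * k + 1) + 1) * (T 1 - 1) := by
  rw [D, show (k + 2) * (2 * k + 1) + 1 = (2 * k ^ 2 + 4 * k + 1) + 1 + (k + 1) by ring,
    show (k + 1) * (2 * k + 1 + 1) = (2 * k ^ 2 + 4 * k + 1) + 1 by ring,
    show k * (2 * k + 1 + 3) + 1 = 2 * k ^ 2 + 4 * k + 1 by ring, T_add, T_add]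
  ring

lemma e_two_mul_add_one_self (k : ℤ) : e (2 * k + 1) k = -(k ^ 2 + 2 * k) := by
  rw [e, show (2 * k + 1) * (2 * k + 1 - 1) = 2 * (2 * k ^ 2 + k) by ring,
    Int.mul_ediv_cancel_left _ two_ne_zero]
  ring

/-- For `k ≥ 1`, with `m = 2k² + 4k + 1`, one has
`t^{e(2k+1,k)} · D_{2k+1,k}(t) = (t² - 1) · Ψ_m(t)`; in particular
`D_{2k+1,k}(t) = (t^{2k²+4k+1} + 1)(t - 1)`. -/
theorem D_two_k_add_one_k_eq (k : ℤ) (hk : 1 ≤ k) :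
    T (e (2 * k + 1) k) * D (2 * k + 1) k = (T 2 - 1) * Psi (2 * k ^ 2 + 4 * k + 1) ∧
    D (2 * k + 1) k = (T (2 * k ^ 2 + 4 * k + 1) + 1) * (T 1 - 1) := by
  refine ⟨?_, D_two_mul_add_one_self k⟩
  set M := k ^ 2 + 2 * k
  have hM : 0 ≤ M := by nlinarith
  have hPsi : (T 1 + 1) * Psi (2 * M + 1) = T (M + 1) + T (-M) := Psi.T_one_add_one_mul hM
  calc T (e (2 * k + 1) k) * D (2 * k + 1) k
      = (T (-M) * T (2 * M + 1) + T (-M)) * (T 1 - 1) := by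
        rw [e_two_mul_add_one_self, D_two_mul_add_one_self,
          show 2 * k ^ 2 + 4 * k + 1 = 2 * M + 1 by ring]
        ring
    _ = (T 1 - 1) * ((T 1 + 1) * Psi (2 * M + 1)) := by
        rw [hPsi, ← T_add, show -M + (2 * M + 1) = M + 1 by ring]
        ring
    _ = (T 2 - 1) * Psi (2 * k ^ 2 + 4 * k + 1) := by
        rw [T_two_sub_one, show 2 * k ^ 2 + 4 * k + 1 = 2 * M + 1 by ring]
        ring
end

section
/- Let k ≥ 1 be an integer and n ∈ ℤ, and let V_{n,k} ∈ ℤ[t, t⁻¹] be the unique Laurent polynomial with (t² − 1)·V_{n,k}(t) = t^{e(n,k)}·D_{n,k}(t). Then V_{n,k} is symmetric (i.e., its coefficient of t^j equals its coefficient of t^{−j} for all j ∈ ℤ) if and only if n = k−1, n = k, n = 2k, or n = 2k+1. -/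
open LaurentPolynomial

/-!
`V` is symmetric iff `D` is antisymmetric about `1 - e`, i.e. `D(t⁻¹) = -t^{2e-2} D(t)`,
because `t² - 1` is antisymmetric about `1` and `ℤ[t,t⁻¹]` is a domain.
Both sides of this identity have the same fourth moment `∑ₘ cₘ m⁴` only when
`(n-k+1)(n-k)(n-2k)(n-2k-1)(n² + 3n + 2k² + 4k + 2) = 0`, and the last factor is positive for `k ≥ 1`.
Conversely, for these four values of `n` the six monomials of `D` cancel in pairs down to
`(t - 1)(t^{1-2e} + 1)`, which is antisymmetric about `1 - e`.
-/

namespace LaurentPolynomial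

variable {R : Type*}

theorem T_mul_T_of_add_eq [Semiring R] {m n p : ℤ} (h : m + n = p) :
    (T m * T n : R[T;T⁻¹]) = T p := by
  rw [← T_add, h]

theorem T_mul_T_of_add_eq_zero [Semiring R] {m n : ℤ} (h : m + n = 0) :
    (T m * T n : R[T;T⁻¹]) = 1 := by
  rw [T_mul_T_of_add_eq h, T_zero]

theorem forall_coeff_eq_coeff_neg_iff [CommSemiring R] {f : R[T;T⁻¹]} :
    (∀ j, f.coeff j = f.coeff (-j)) ↔ invert f = f := by
  refine ⟨fun h => ?_, fun h j => ?_⟩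
  · ext j
    rw [invert_apply, h j]
  · rw [← invert_apply, h]

theorem T_sub_one_ne_zero [Ring R] [Nontrivial R] {a : ℤ} (ha : a ≠ 0) :
    (T a - 1 : R[T;T⁻¹]) ≠ 0 := by
  intro h
  have := congrArg (fun f : R[T;T⁻¹] => f.coeff 0) h
  simp [ha] at this

theorem invert_T_sub_one [CommRing R] (a : ℤ) :
    invert (T a - 1 : R[T;T⁻¹]) = -T (-a) * (T a - 1) := by
  simp only [map_sub, invert_T, map_one, neg_mul, mul_sub, ← T_add, neg_add_cancel, T_zero]
  ring

theorem invert_T_add_one [CommSemiring R] (c : ℤ) :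
    invert (T c + 1 : R[T;T⁻¹]) = T (-c) * (T c + 1) := by
  rw [map_add, invert_T, map_one, mul_add, mul_one, T_mul_T_of_add_eq (neg_add_cancel c), T_zero,
    add_comm]

theorem invert_T_sub_one_mul_T_add_one [CommRing R] (a c : ℤ) :
    invert ((T a - 1) * (T c + 1) : R[T;T⁻¹]) = -T (-(a + c)) * ((T a - 1) * (T c + 1)) := by
  rw [map_mul, invert_T_sub_one, invert_T_add_one]
  linear_combination -(T a - 1) * (T c + 1) * T_mul_T_of_add_eq (R := R) (neg_add a c).symm

theorem invert_eq_self_iff_of_T_sub_one_mul_eq [CommRing R] [IsDomain R] {a e : ℤ} (ha : a ≠ 0)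
    {f g : R[T;T⁻¹]} (h : (T a - 1) * f = T e * g) :
    invert f = f ↔ invert g = -T (2 * e - a) * g := by
  have h_inv : (T a - 1) * invert f = -T (a - e) * invert g := by
    have h' := congrArg invert h
    rw [map_mul, map_mul, invert_T_sub_one, invert_T] at h'
    linear_combination (-T a) * h' -
      (T a - 1) * invert f * T_mul_T_of_add_eq_zero (R := R) (add_neg_cancel a) -
      invert g * T_mul_T_of_add_eq (R := R) (sub_eq_add_neg a e).symm
  constructor
  · intro hf
    rw [hf, h] at h_inv
    linear_combination T (e - a) * h_inv -
      invert g * T_mul_T_of_add_eq_zero (R := R) (show e - a + (a - e) = 0 by ring) -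
      g * T_mul_T_of_add_eq (R := R) (show e - a + e = 2 * e - a by ring)
  · intro hg
    refine mul_left_cancel₀ (T_sub_one_ne_zero ha) ?_
    rw [h_inv, h, hg]
    linear_combination g * T_mul_T_of_add_eq (R := R) (show a - e + (2 * e - a) = e by ring)

noncomputable def moment [Ring R] (p : ℕ) : R[T;T⁻¹] →+ R :=
  (Finsupp.liftAddHom fun m : ℤ => AddMonoidHom.mulRight ((m : R) ^ p)).comp
    AddMonoidAlgebra.coeffAddEquiv.toAddMonoidHom

@[simp]
theorem moment_T [Ring R] (p : ℕ) (m : ℤ) : moment p (T m : R[T;T⁻¹]) = (m : R) ^ p := by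
  change Finsupp.liftAddHom _ (Finsupp.single m 1) = _
  rw [Finsupp.liftAddHom_apply_single, AddMonoidHom.coe_mulRight]
  exact one_mul _

@[simp]
theorem moment_one [Ring R] (p : ℕ) [NeZero p] : moment p (1 : R[T;T⁻¹]) = 0 := by
  rw [← T_zero, moment_T, Int.cast_zero, zero_pow (NeZero.ne p)]

end LaurentPolynomial

theorem two_mul_e (n k : ℤ) : 2 * e n k = n ^ 2 - n + 2 * k ^ 2 - 2 * k - 4 * n * k := by
  have h : 2 * (n * (n - 1) / 2) = n * (n - 1) :=
    Int.two_mul_ediv_two_of_even (Int.even_mul_pred_self n)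
  unfold e
  linear_combination h

theorem moment_four_invert_D_sub (n k : ℤ) :
    moment 4 (invert (D n k)) - moment 4 (-T (2 * e n k - 2) * D n k) =
      -4 * ((n - (k - 1)) * (n - k) * (n - 2 * k) * (n - 2 * k - 1) *
        (n ^ 2 + 3 * n + 2 * k ^ 2 + 4 * k + 2)) := by
  rw [two_mul_e]
  simp only [D, map_add, map_sub, map_neg, map_one, invert_T, neg_mul, mul_add, mul_sub, mul_one,
    mul_neg, ← T_add, moment_T, moment_one, Int.cast_id]
  ring

theorem eq_of_invert_D_eq {n k : ℤ} (hk : 1 ≤ k)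
    (h : invert (D n k) = -T (2 * e n k - 2) * D n k) :
    n = k - 1 ∨ n = k ∨ n = 2 * k ∨ n = 2 * k + 1 := by
  have hmoment := moment_four_invert_D_sub n k
  rw [h, sub_self] at hmoment
  have hpos : 0 < n ^ 2 + 3 * n + 2 * k ^ 2 + 4 * k + 2 := by
    nlinarith [sq_nonneg (2 * n + 3), sq_nonneg (k - 1)]
  simp only [zero_eq_mul, mul_eq_zero, sub_eq_zero, hpos.ne', or_false] at hmoment
  omega

theorem D_eq_of_mem {n k : ℤ} (h : n = k - 1 ∨ n = k ∨ n = 2 * k ∨ n = 2 * k + 1) :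
    D n k = (T 1 - 1) * (T (1 - 2 * e n k) + 1) := by
  rw [two_mul_e]
  rcases h with rfl | rfl | rfl | rfl <;>
  · simp only [D, mul_add, add_mul, mul_sub, sub_mul, ← T_add, mul_one, one_mul]
    ring_nf

theorem invert_D_eq_of_mem {n k : ℤ} (h : n = k - 1 ∨ n = k ∨ n = 2 * k ∨ n = 2 * k + 1) :
    invert (D n k) = -T (2 * e n k - 2) * D n k := by
  rw [D_eq_of_mem h, invert_T_sub_one_mul_T_add_one]
  ring_nf

/-- For `k ≥ 1` and `n ∈ ℤ`, the Laurent polynomial `V_{n,k}` determined by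
`(t² - 1) · V_{n,k} = t^{e(n,k)} · D_{n,k}` is symmetric (its coefficient of `t^j`
equals its coefficient of `t^{-j}` for all `j`) if and only if
`n = k - 1`, `n = k`, `n = 2k`, or `n = 2k + 1`. -/
theorem V_symmetric_iff (k : ℤ) (hk : 1 ≤ k) (n : ℤ) (V : LaurentPolynomial ℤ)
    (hV : (T 2 - 1) * V = T (e n k) * D n k) :
    (∀ j : ℤ, V.coeff j = V.coeff (-j)) ↔ (n = k - 1 ∨ n = k ∨ n = 2 * k ∨ n = 2 * k + 1) := by
  rw [forall_coeff_eq_coeff_neg_iff, invert_eq_self_iff_of_T_sub_one_mul_eq two_ne_zero hV]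
  exact ⟨eq_of_invert_D_eq hk, invert_D_eq_of_mem⟩
end

section
/- Let p be a prime and r ∈ ℕ. Let N = p^r, N = 3p^r, N = 4p^r, or (assuming p ≠ 3) N = 6p^r. Then there is no Laurent polynomial P ∈ ℤ[t, t⁻¹] such that the N-th cyclotomic polynomial Φ_N divides P in ℤ[t, t⁻¹] and P satisfies P(1) = 1, P(e^{2πi/3}) = 1, |P(i)| = 1, and |P(e^{πi/3})| = 3^{s/2} for some s ∈ ℕ (evaluations taken in ℂ). -/
open Polynomial LaurentPolynomial

/-- Evaluation of an integer Laurent polynomial at a complex number `z`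
(meaningful for `z ≠ 0`): `∑_j a_j z^j`. -/
noncomputable def evalC (z : ℂ) (P : LaurentPolynomial ℤ) : ℂ :=
  ∑ j ∈ P.coeff.support, (P.coeff j : ℂ) * z ^ j

/-!
Write `N = n * p ^ k` with `p ∤ n` and `n ∈ {1, 3, 4, 6}`, and let `ζ` be the
special point that is a primitive `n`-th root of unity. Modulo `p`, `Φ_n` divides
`Φ_N`, and `Φ_n(ζ) = 0`, so `P(ζ) = Φ_N(ζ) Q(ζ) ∈ p ℤ[ζ]`. As `ζ + ζ⁻¹ ∈ ℤ`, every
element of `ℤ[ζ, ζ⁻¹]` has the form `a + bζ` with `|a + bζ|² ∈ ℤ`; hence `p²` divides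
the integer `|P(ζ)|²`. But `|P(ζ)|²` is `1` for `n = 1, 3, 4` and a power of `3` for
`n = 6`, where `p ≠ 3`.
-/

theorem evalC_eq_eval₂ {z : ℂ} (hz : z ≠ 0) (P : ℤ[T;T⁻¹]) :
    evalC z P = eval₂ (Int.castRingHom ℂ) (Units.mk0 z hz) P := by
  have hsum (Q : ℤ[T;T⁻¹]) : evalC z Q = Q.coeff.sum fun j a => (a : ℂ) * z ^ j := rfl
  induction P using LaurentPolynomial.induction_on' with
  | add p q hp hq =>
    rw [map_add, ← hp, ← hq, hsum, hsum, hsum, AddMonoidAlgebra.coeff_add]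
    exact Finsupp.sum_add_index' (by simp) (by intros; push_cast; ring)
  | C_mul_T n a =>
    rw [hsum, eval₂_C_mul_T, ← single_eq_C_mul_T, AddMonoidAlgebra.coeff_single,
      Finsupp.sum_single_index (by simp)]
    simp

theorem evalC_toLaurent_mul {z : ℂ} (hz : z ≠ 0) (f : ℤ[X]) (Q : ℤ[T;T⁻¹]) :
    evalC z (toLaurent f * Q) = aeval z f * evalC z Q := by
  rw [evalC_eq_eval₂ hz, evalC_eq_eval₂ hz, map_mul, eval₂_toLaurent, aeval_def]
  rfl

section UnitCircle

variable {z : ℂ} {e : ℤ}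

theorem sq_eq_intCast_mul_sub_one (hre : 2 * z.re = e) (hz : ‖z‖ = 1) : z ^ 2 = e * z - 1 := by
  have hn : z.re * z.re + z.im * z.im = 1 := by
    rw [← Complex.normSq_apply, Complex.normSq_eq_norm_sq, hz, one_pow]
  apply Complex.ext <;> simp only [pow_two, Complex.mul_re, Complex.mul_im, Complex.sub_re,
    Complex.sub_im, Complex.intCast_re, Complex.intCast_im, Complex.one_re, Complex.one_im, ← hre]
  · linear_combination -hn
  · ring

theorem exists_zpow_eq_intCast_add_mul (hz : z ≠ 0) (hsq : z ^ 2 = e * z - 1) (n : ℤ) :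
    ∃ a b : ℤ, z ^ n = a + b * z := by
  induction n using Int.induction_on with
  | zero => exact ⟨1, 0, by simp⟩
  | succ n ih =>
    obtain ⟨a, b, h⟩ := ih
    refine ⟨-b, a + b * e, ?_⟩
    rw [zpow_add_one₀ hz, h]
    push_cast
    linear_combination b * hsq
  | pred n ih =>
    obtain ⟨a, b, h⟩ := ih
    refine ⟨a * e + b, -a, ?_⟩
    have hinv : z⁻¹ = e - z := inv_eq_of_mul_eq_one_right (by linear_combination -hsq)
    rw [zpow_sub_one₀ hz, h, hinv]
    push_cast
    linear_combination -b * hsq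

theorem exists_evalC_eq_intCast_add_mul (hz : z ≠ 0) (hsq : z ^ 2 = e * z - 1)
    (R : ℤ[T;T⁻¹]) : ∃ a b : ℤ, evalC z R = a + b * z := by
  refine Finset.sum_induction _ (fun w => ∃ a b : ℤ, w = a + b * z) ?_ ⟨0, 0, by simp⟩ ?_
  · rintro _ _ ⟨a, b, rfl⟩ ⟨a', b', rfl⟩
    exact ⟨a + a', b + b', by push_cast; ring⟩
  · intro j _
    obtain ⟨a, b, h⟩ := exists_zpow_eq_intCast_add_mul hz hsq j
    exact ⟨R.coeff j * a, R.coeff j * b, by rw [h]; push_cast; ring⟩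

theorem normSq_intCast_add_intCast_mul (hre : 2 * z.re = e) (hz : ‖z‖ = 1) (a b : ℤ) :
    Complex.normSq (a + b * z) = a ^ 2 + e * a * b + b ^ 2 := by
  have hn : z.re * z.re + z.im * z.im = 1 := by
    rw [← Complex.normSq_apply, Complex.normSq_eq_norm_sq, hz, one_pow]
  simp [Complex.normSq_apply, ← hre]
  linear_combination (b : ℝ) ^ 2 * hn

theorem exists_normSq_evalC_eq_intCast (hre : 2 * z.re = e) (hz : ‖z‖ = 1) (R : ℤ[T;T⁻¹]) :
    ∃ m : ℤ, Complex.normSq (evalC z R) = m := by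
  have hz0 : z ≠ 0 := norm_ne_zero_iff.mp (by rw [hz]; exact one_ne_zero)
  obtain ⟨a, b, h⟩ := exists_evalC_eq_intCast_add_mul hz0 (sq_eq_intCast_mul_sub_one hre hz) R
  exact ⟨a ^ 2 + e * a * b + b ^ 2, by rw [h, normSq_intCast_add_intCast_mul hre hz]; norm_cast⟩

end UnitCircle

theorem cyclotomic_dvd_cyclotomic_mul_prime_pow {p n : ℕ} (hp : p.Prime) (hn : ¬ p ∣ n)
    (k : ℕ) : cyclotomic n (ZMod p) ∣ cyclotomic (n * p ^ k) (ZMod p) := by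
  have := Fact.mk hp
  rcases k.eq_zero_or_pos with rfl | hk
  · simp
  rw [mul_comm, cyclotomic_mul_prime_pow_eq _ hn hk]
  exact dvd_pow_self _ (Nat.sub_ne_zero_of_lt (Nat.pow_lt_pow_right hp.one_lt (by omega)))

theorem exists_eq_mul_add_C_mul_of_map_dvd {p : ℕ} {f g : ℤ[X]}
    (h : f.map (Int.castRingHom (ZMod p)) ∣ g.map (Int.castRingHom (ZMod p))) :
    ∃ A G : ℤ[X], g = f * A + Polynomial.C (p : ℤ) * G := by
  obtain ⟨B, hB⟩ := h
  obtain ⟨A, rfl⟩ := map_surjective (Int.castRingHom (ZMod p)) ZMod.intCast_surjective B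
  obtain ⟨G, hG⟩ : Polynomial.C (p : ℤ) ∣ g - f * A := by
    rw [C_dvd_iff_dvd_coeff]
    intro i
    rw [← ZMod.intCast_zmod_eq_zero_iff_dvd, ← eq_intCast (Int.castRingHom (ZMod p)),
      ← coeff_map, Polynomial.map_sub, Polynomial.map_mul, hB, sub_self, coeff_zero]
  exact ⟨A, G, by rw [← hG]; ring⟩

theorem exists_evalC_eq_prime_mul {p n k : ℕ} (hp : p.Prime) (hpn : ¬ p ∣ n) (hn : 0 < n)
    {ζ : ℂ} (hζ : IsPrimitiveRoot ζ n) {P : ℤ[T;T⁻¹]}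
    (hP : toLaurent (cyclotomic (n * p ^ k) ℤ) ∣ P) :
    ∃ R : ℤ[T;T⁻¹], evalC ζ P = p * evalC ζ R := by
  obtain ⟨Q, rfl⟩ := hP
  obtain ⟨A, G, hAG⟩ := exists_eq_mul_add_C_mul_of_map_dvd (p := p)
    (f := cyclotomic n ℤ) (g := cyclotomic (n * p ^ k) ℤ)
    (by simpa only [map_cyclotomic] using cyclotomic_dvd_cyclotomic_mul_prime_pow hp hpn k)
  have hroot : aeval ζ (cyclotomic n ℤ) = 0 := by
    simpa [aeval_def, eval₂_eq_eval_map] using hζ.isRoot_cyclotomic hn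
  have hζ0 : ζ ≠ 0 := hζ.ne_zero hn.ne'
  refine ⟨toLaurent G * Q, ?_⟩
  rw [evalC_toLaurent_mul hζ0, evalC_toLaurent_mul hζ0, hAG]
  simp [hroot, mul_assoc]

theorem prime_sq_dvd_of_norm_evalC_sq_eq {p n k c : ℕ} (hp : p.Prime) (hpn : ¬ p ∣ n)
    (hn : 0 < n) {ζ : ℂ} (hζ : IsPrimitiveRoot ζ n) {e : ℤ} (hre : 2 * ζ.re = e)
    {P : ℤ[T;T⁻¹]} (hP : toLaurent (cyclotomic (n * p ^ k) ℤ) ∣ P)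
    (hc : ‖evalC ζ P‖ ^ 2 = c) : p ^ 2 ∣ c := by
  obtain ⟨R, hR⟩ := exists_evalC_eq_prime_mul hp hpn hn hζ hP
  obtain ⟨m, hm⟩ := exists_normSq_evalC_eq_intCast hre (hζ.norm'_eq_one hn.ne') R
  have hcm : (c : ℤ) = p ^ 2 * m := by
    rw [← Complex.normSq_eq_norm_sq, hR, Complex.normSq_mul, Complex.normSq_natCast, hm] at hc
    exact_mod_cast (hc.symm.trans (by ring) : (c : ℝ) = (p : ℝ) ^ 2 * m)
  exact Int.natCast_dvd_natCast.mp ⟨m, by rw [hcm]; push_cast; ring⟩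

theorem exists_not_dvd_eq_mul_prime_pow {p N r : ℕ} (hp : p.Prime)
    (hN : N = p ^ r ∨ N = 3 * p ^ r ∨ N = 4 * p ^ r ∨ (p ≠ 3 ∧ N = 6 * p ^ r)) :
    ∃ n k, N = n * p ^ k ∧ ¬ p ∣ n ∧ (n = 1 ∨ n = 3 ∨ n = 4 ∨ n = 6) := by
  have h2 : p ∣ 2 → p = 2 := (Nat.prime_dvd_prime_iff_eq hp Nat.prime_two).1
  have h3 : p ∣ 3 → p = 3 := (Nat.prime_dvd_prime_iff_eq hp Nat.prime_three).1
  have h4 : p ∣ 4 → p = 2 := fun h => h2 (hp.dvd_of_dvd_pow (n := 2) h)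
  have h6 : p ∣ 6 → p = 2 ∨ p = 3 := fun h =>
    ((Nat.Prime.dvd_mul hp).1 (show p ∣ 2 * 3 from h)).imp h2 h3
  rcases hN with rfl | rfl | rfl | ⟨hp3, rfl⟩
  · exact ⟨1, r, by ring, hp.not_dvd_one, by simp⟩
  · by_cases hp3 : p = 3
    · subst hp3; exact ⟨1, r + 1, by ring, hp.not_dvd_one, by simp⟩
    · exact ⟨3, r, rfl, mt h3 hp3, by simp⟩
  · by_cases hp2 : p = 2
    · subst hp2; exact ⟨1, r + 2, by ring, hp.not_dvd_one, by simp⟩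
    · exact ⟨4, r, rfl, mt h4 hp2, by simp⟩
  · by_cases hp2 : p = 2
    · subst hp2; exact ⟨3, r + 1, by ring, by norm_num, by simp⟩
    · exact ⟨6, r, rfl, fun h => (h6 h).elim hp2 hp3, by simp⟩

theorem Complex.isPrimitiveRoot_exp_two_pi_I_div_three :
    IsPrimitiveRoot (exp (2 * Real.pi * I / 3)) 3 := by
  simpa using isPrimitiveRoot_exp 3 (by norm_num)

theorem Complex.two_mul_re_exp_two_pi_I_div_three : 2 * (exp (2 * Real.pi * I / 3)).re = -1 := by
  rw [exp_re]
  simp [show 2 * Real.pi / 3 = Real.pi - Real.pi / 3 by ring, Real.cos_pi_sub]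

theorem Complex.isPrimitiveRoot_exp_pi_I_div_three : IsPrimitiveRoot (exp (Real.pi * I / 3)) 6 := by
  convert isPrimitiveRoot_exp 6 (by norm_num) using 2
  push_cast
  ring

theorem Complex.two_mul_re_exp_pi_I_div_three : 2 * (exp (Real.pi * I / 3)).re = 1 := by
  rw [exp_re]
  simp

/-- Let `p` be prime, `r ∈ ℕ`, and `N = p^r`, `3p^r`, `4p^r`, or (for `p ≠ 3`) `6p^r`.
Then no Laurent polynomial `P ∈ ℤ[t,t⁻¹]` divisible by `Φ_N` can satisfy the special
value conditions of Jones polynomials of knots: `P(1) = 1`, `P(ζ₃) = 1`, `|P(i)| = 1`,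
and `|P(ζ₆)| = 3^{s/2}` for some `s ∈ ℕ`. -/
theorem cyclotomic_not_dvd_jones (p : ℕ) (hp : p.Prime) (r : ℕ) (N : ℕ)
    (hN : N = p ^ r ∨ N = 3 * p ^ r ∨ N = 4 * p ^ r ∨ (p ≠ 3 ∧ N = 6 * p ^ r)) :
    ¬ ∃ P : LaurentPolynomial ℤ,
        toLaurent (cyclotomic N ℤ) ∣ P ∧
        evalC 1 P = 1 ∧
        evalC (Complex.exp (2 * Real.pi * Complex.I / 3)) P = 1 ∧
        ‖evalC Complex.I P‖ = 1 ∧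
        ∃ s : ℕ, ‖evalC (Complex.exp (Real.pi * Complex.I / 3)) P‖ =
          (3 : ℝ) ^ ((s : ℝ) / 2) := by
  rintro ⟨P, hP, h1, h3, h4, s, h6⟩
  obtain ⟨n, k, rfl, hpn, hn⟩ := exists_not_dvd_eq_mul_prime_pow hp hN
  have hdvd {ζ : ℂ} (hζ : IsPrimitiveRoot ζ n) (e : ℤ) (hre : 2 * ζ.re = e) (c : ℕ)
      (hc : ‖evalC ζ P‖ ^ 2 = c) : p ∣ c :=
    (dvd_pow_self p two_ne_zero).trans <|
      prime_sq_dvd_of_norm_evalC_sq_eq hp hpn (by omega) hζ hre hP hc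
  rcases hn with rfl | rfl | rfl | rfl
  · exact hp.not_dvd_one (hdvd IsPrimitiveRoot.one 2 (by simp) 1 (by simp [h1]))
  · exact hp.not_dvd_one (hdvd Complex.isPrimitiveRoot_exp_two_pi_I_div_three (-1)
      (by exact_mod_cast Complex.two_mul_re_exp_two_pi_I_div_three) 1 (by simp [h3]))
  · exact hp.not_dvd_one (hdvd Complex.isPrimitiveRoot_I 0 (by simp) 1 (by simp [h4]))
  · have hs : ‖evalC (Complex.exp (Real.pi * Complex.I / 3)) P‖ ^ 2 = (3 ^ s : ℕ) := by
      rw [h6, ← Real.rpow_natCast _ 2, ← Real.rpow_mul (by norm_num)]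
      simp
    have hp3 : p = 3 := (Nat.prime_dvd_prime_iff_eq hp Nat.prime_three).mp <| hp.dvd_of_dvd_pow <|
      hdvd Complex.isPrimitiveRoot_exp_pi_I_div_three 1
        (by exact_mod_cast Complex.two_mul_re_exp_pi_I_div_three) _ hs
    exact hpn (hp3 ▸ by norm_num)
end

section
/- The set S = {z ∈ ℂ : there exists an integer k ≥ 2 with z^{k²+k−1} = −1 and z ≠ −1} is contained in the unit circle {z ∈ ℂ : |z| = 1} and is dense in the unit circle. -/
/-!
Points of `S` have modulus one since their norm is a positive-exponent root of `1`. For density,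
the `n`-th roots of `-1 = exp (π i)` sit at the angles `(π + 2πj)/n`, so every point of the circle
lies within arc length `π/n` of one of them; of two neighbouring roots, both within `3π/n`, at most
one is `-1`. Letting `n = k² + k - 1` grow gives density.
-/

open Complex
open scoped Real

lemma norm_eq_one_of_pow_eq_neg_one {z : ℂ} {n : ℕ} (hn : n ≠ 0) (h : z ^ n = -1) : ‖z‖ = 1 := by
  rw [← pow_eq_one_iff_of_nonneg (norm_nonneg z) hn, ← norm_pow, h, norm_neg, norm_one]

lemma dist_exp_mul_I_le (a b : ℝ) : dist (exp (a * I)) (exp (b * I)) ≤ dist a b := by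
  simpa [circleMap] using (lipschitzWith_circleMap 0 1).dist_le_mul a b

lemma exp_mul_I_pow_eq {n : ℕ} (hn : n ≠ 0) (φ : ℝ) (j : ℤ) :
    exp (((φ + 2 * π * j) / n : ℝ) * I) ^ n = exp (φ * I) := by
  rw [← exp_nat_mul]
  have hn' : (n : ℂ) ≠ 0 := Nat.cast_ne_zero.mpr hn
  have : (n : ℂ) * (((φ + 2 * π * j) / n : ℝ) * I) = φ * I + j * (2 * π * I) := by
    push_cast
    field_simp
  rw [this, exp_add, exp_int_mul_two_pi_mul_I, mul_one]

lemma exists_int_abs_sub_div_le {n : ℕ} (hn : n ≠ 0) (θ φ : ℝ) :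
    ∃ j : ℤ, |θ - (φ + 2 * π * j) / n| ≤ π / n := by
  have hn' : (0 : ℝ) < n := Nat.cast_pos.mpr (Nat.pos_of_ne_zero hn)
  set t := (n * θ - φ) / (2 * π)
  refine ⟨round t, ?_⟩
  have : θ - (φ + 2 * π * round t) / n = 2 * π / n * (t - round t) := by
    simp only [t]
    field_simp
    ring
  rw [this, abs_mul, abs_of_pos (by positivity)]
  calc 2 * π / n * |t - round t| ≤ 2 * π / n * (1 / 2) := by gcongr; exact abs_sub_round t
    _ = π / n := by ring

lemma exp_mul_I_ne_exp_add_two_pi_div_mul_I {n : ℕ} (hn : 2 ≤ n) (a : ℝ) :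
    exp (a * I) ≠ exp ((a + 2 * π / n : ℝ) * I) := by
  intro h
  have hrot : exp ((a + 2 * π / n : ℝ) * I) = exp (a * I) * exp (2 * π * I / n) := by
    rw [← exp_add]
    push_cast
    ring_nf
  rw [hrot, left_eq_mul₀ (exp_ne_zero _)] at h
  exact (isPrimitiveRoot_exp n (by omega)).ne_one (by omega) h

lemma exists_pow_eq_exp_mul_I_ne_dist_le {n : ℕ} (hn : 2 ≤ n) (φ : ℝ) (c : ℂ) {w : ℂ}
    (hw : ‖w‖ = 1) : ∃ z, z ^ n = exp (φ * I) ∧ z ≠ c ∧ dist w z ≤ 3 * π / n := by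
  have hn0 : n ≠ 0 := by omega
  set a : ℤ → ℝ := fun i => (φ + 2 * π * i) / n
  obtain ⟨j, hj⟩ : ∃ j, |arg w - a j| ≤ π / n := exists_int_abs_sub_div_le hn0 (arg w) φ
  have ha : a (j + 1) = a j + 2 * π / n := by
    simp only [a]
    push_cast
    ring
  have hdist (i : ℤ) : dist w (exp (a i * I)) ≤ |arg w - a i| := by
    have hw' : w = exp (arg w * I) := by
      simpa [hw] using (norm_mul_exp_arg_mul_I w).symm
    rw [← Real.dist_eq]
    nth_rewrite 1 [hw']
    exact dist_exp_mul_I_le _ _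
  by_cases hc : exp (a j * I) = c
  · refine ⟨exp (a (j + 1) * I), exp_mul_I_pow_eq hn0 φ (j + 1), ?_, (hdist _).trans ?_⟩
    · rw [← hc, ha]
      exact (exp_mul_I_ne_exp_add_two_pi_div_mul_I hn _).symm
    rw [ha, sub_add_eq_sub_sub]
    calc |arg w - a j - 2 * π / n| ≤ |arg w - a j| + |2 * π / n| := abs_sub _ _
      _ ≤ 3 * π / n := by
        rw [abs_of_pos (by positivity : (0 : ℝ) < 2 * π / n)]
        linarith [show π / n + 2 * π / n = 3 * π / n by ring]
  · refine ⟨exp (a j * I), exp_mul_I_pow_eq hn0 φ j, hc, (hdist _).trans ?_⟩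
    calc |arg w - a j| ≤ π / n := hj
      _ ≤ 3 * π / n := by gcongr; linarith [Real.pi_pos]

lemma le_sq_add_sub_one {k : ℕ} (hk : 1 ≤ k) : k ≤ k ^ 2 + k - 1 := by
  have : 1 ≤ k ^ 2 := Nat.one_le_pow _ _ hk
  omega

/-- The set `S = {z ∈ ℂ : ∃ k ≥ 2, z^{k²+k-1} = -1 ∧ z ≠ -1}` is contained in the unit
circle and is dense in the unit circle. -/
theorem roots_dense_in_circle :
    {z : ℂ | ∃ k : ℕ, 2 ≤ k ∧ z ^ (k ^ 2 + k - 1) = -1 ∧ z ≠ -1} ⊆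
      {z : ℂ | ‖z‖ = 1} ∧
    {z : ℂ | ‖z‖ = 1} ⊆
      closure {z : ℂ | ∃ k : ℕ, 2 ≤ k ∧ z ^ (k ^ 2 + k - 1) = -1 ∧ z ≠ -1} := by
  constructor
  · rintro z ⟨k, hk, hz, -⟩
    have hkn : k ≤ k ^ 2 + k - 1 := le_sq_add_sub_one (by omega)
    exact norm_eq_one_of_pow_eq_neg_one (by omega) hz
  · intro w hw
    refine Metric.mem_closure_iff.2 fun ε hε => ?_
    obtain ⟨k, hk⟩ := exists_nat_gt (max 2 (3 * π / ε))
    have hk2 : 2 ≤ k := by exact_mod_cast (le_max_left _ _).trans hk.le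
    have hk0 : (0 : ℝ) < k := by positivity
    have hkn : k ≤ k ^ 2 + k - 1 := le_sq_add_sub_one (by omega)
    obtain ⟨z, hz, hz1, hwz⟩ := exists_pow_eq_exp_mul_I_ne_dist_le (hk2.trans hkn) π (-1) hw
    refine ⟨z, ⟨k, hk2, exp_pi_mul_I ▸ hz, hz1⟩, hwz.trans_lt ?_⟩
    calc 3 * π / (k ^ 2 + k - 1 : ℕ) ≤ 3 * π / k := by gcongr
      _ < ε := (div_lt_comm₀ hk0 hε).2 ((le_max_right _ _).trans_lt hk)
end
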